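/- arXiv:2209.01628 — 2 statements merged into one kernel-verified Lean document; each statement's English description precedes it below -/
import Mathlib

section
/- Let μ ∈ L^∞(0,1) be non-negative almost everywhere, let K(t) := ∫₀¹ μ(α) t^{-α}/Γ(1-α) dα for t > 0, and let p ∈ ℂ with Re p > 0. Then the function (t,α) ↦ e^{-pt} μ(α) t^{-α}/Γ(1-α) is absolutely integrable on (0,∞) × (0,1), and ∫₀^∞ e^{-pt} K(t) dt = ∫₀¹ μ(α) p^{α-1} dα, where p^{α-1} denotes the principal branch of the complex power. -/
/-!
For fixed `α < 1` the inner `t`-integral is the Laplace transform of `t^(-α)/Γ(1-α)`, which is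
`p^(α-1)`: for real `p > 0` this is the Gamma integral, and since both sides are holomorphic on
`Re p > 0` the identity theorem extends it to the half-plane. The absolute value of the integrand
integrates in `t` to `|μ(α)| (Re p)^(α-1)`, which is bounded for `α ∈ (0,1)`, so Tonelli gives
integrability on the product and Fubini lets us exchange the two integrals.
-/

open MeasureTheory Set Complex Filter Topology

lemma integrableOn_rpow_mul_exp_neg_mul_Ioi {s b : ℝ} (hs : -1 < s) (hb : 0 < b) :
    IntegrableOn (fun t : ℝ => t ^ s * Real.exp (-(b * t))) (Ioi 0) := by
  simpa [Real.rpow_one] using integrableOn_rpow_mul_exp_neg_mul_rpow hs one_pos hb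

lemma norm_cpow_mul_cexp_neg_mul {t : ℝ} (ht : 0 < t) (a p : ℂ) :
    ‖(t : ℂ) ^ (a - 1) * cexp (-(p * t))‖ = t ^ (a.re - 1) * Real.exp (-(p.re * t)) := by
  rw [norm_mul, norm_cpow_eq_rpow_re_of_pos ht, Complex.norm_exp]
  simp

lemma continuousOn_cpow_mul_cexp_neg_mul (a p : ℂ) :
    ContinuousOn (fun t : ℝ => (t : ℂ) ^ (a - 1) * cexp (-(p * t))) (Ioi 0) := by
  intro t ht
  refine ContinuousAt.continuousWithinAt (ContinuousAt.mul ?_ (by fun_prop))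
  exact (continuousAt_cpow_const (ofReal_mem_slitPlane.2 ht)).comp continuous_ofReal.continuousAt

lemma integrableOn_cpow_mul_cexp_neg_mul_Ioi {a p : ℂ} (ha : 0 < a.re) (hp : 0 < p.re) :
    IntegrableOn (fun t : ℝ => (t : ℂ) ^ (a - 1) * cexp (-(p * t))) (Ioi 0) := by
  refine Integrable.mono' (integrableOn_rpow_mul_exp_neg_mul_Ioi (s := a.re - 1) (by linarith) hp)
    ((continuousOn_cpow_mul_cexp_neg_mul a p).aestronglyMeasurable measurableSet_Ioi) ?_
  filter_upwards [ae_restrict_mem measurableSet_Ioi] with t ht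
  rw [norm_cpow_mul_cexp_neg_mul ht]

lemma differentiableOn_integral_cpow_mul_cexp_neg_mul_Ioi {a : ℂ} (ha : 0 < a.re) :
    DifferentiableOn ℂ (fun p : ℂ => ∫ t in Ioi (0 : ℝ), (t : ℂ) ^ (a - 1) * cexp (-(p * t)))
      {p | 0 < p.re} := by
  intro z (hz : 0 < z.re)
  have hε : 0 < z.re / 2 := by positivity
  -- on this ball `Re w ≥ Re z / 2`, so `t ^ Re a * exp (-(Re z / 2) t)` dominates the derivative
  have hre : ∀ w ∈ Metric.ball z (z.re / 2), z.re / 2 ≤ w.re := fun w hw => by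
    have := (abs_re_le_norm (w - z)).trans_lt (mem_ball_iff_norm.mp hw)
    rw [sub_re] at this
    linarith [(abs_lt.mp this).1]
  refine (hasDerivAt_integral_of_dominated_loc_of_deriv_le (𝕜 := ℂ)
    (F' := fun w (t : ℝ) => -(t : ℂ) * ((t : ℂ) ^ (a - 1) * cexp (-(w * t))))
    (bound := fun t : ℝ => t ^ a.re * Real.exp (-(z.re / 2 * t)))
    (Metric.ball_mem_nhds z hε)
    (Eventually.of_forall fun w =>
      (continuousOn_cpow_mul_cexp_neg_mul a w).aestronglyMeasurable measurableSet_Ioi)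
    (integrableOn_cpow_mul_cexp_neg_mul_Ioi ha hz)
    ((continuous_ofReal.neg.aestronglyMeasurable).mul
      ((continuousOn_cpow_mul_cexp_neg_mul a z).aestronglyMeasurable measurableSet_Ioi))
    ?_ (integrableOn_rpow_mul_exp_neg_mul_Ioi (by linarith) hε)
    ?_).2.differentiableAt.differentiableWithinAt
  · filter_upwards [ae_restrict_mem measurableSet_Ioi] with t (ht : 0 < t) w hw
    rw [norm_mul, norm_cpow_mul_cexp_neg_mul ht, norm_neg, norm_real, Real.norm_of_nonneg ht.le,
      ← mul_assoc, ← Real.rpow_one_add' ht.le (by linarith), add_sub_cancel]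
    gcongr
    nlinarith [hre w hw]
  · filter_upwards with t w _
    have hlin : HasDerivAt (fun w : ℂ => -(w * t)) (-t) w := by
      simpa using ((hasDerivAt_id w).mul_const (t : ℂ)).fun_neg
    exact (hlin.cexp.const_mul _).congr_deriv (by ring)

lemma eqOn_re_pos_of_forall_ofReal_eq {f g : ℂ → ℂ}
    (hf : DifferentiableOn ℂ f {z | 0 < z.re}) (hg : DifferentiableOn ℂ g {z | 0 < z.re})
    (h : ∀ r : ℝ, 0 < r → f r = g r) : EqOn f g {z | 0 < z.re} := by
  have hU : IsOpen {z : ℂ | 0 < z.re} := isOpen_lt continuous_const continuous_re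
  have hreal : Tendsto ofReal (𝓝[>] (1 : ℝ)) (𝓝[≠] (1 : ℂ)) :=
    tendsto_nhdsWithin_iff.2 ⟨(continuous_ofReal.tendsto' 1 1 ofReal_one).mono_left
      nhdsWithin_le_nhds, eventually_nhdsWithin_of_forall fun r (hr : r ∈ Ioi 1) => by
        simpa [← ofReal_one, ofReal_inj] using hr.ne'⟩
  have hfreq : ∃ᶠ z in 𝓝[≠] (1 : ℂ), f z = g z :=
    hreal.frequently (eventually_nhdsWithin_of_forall fun r (hr : r ∈ Ioi 1) =>
      h r (one_pos.trans hr)).frequently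
  exact (hf.analyticOnNhd hU).eqOn_of_preconnected_of_frequently_eq (hg.analyticOnNhd hU)
    (convex_halfSpace_re_gt 0).isPreconnected (by simp) hfreq

theorem integral_cpow_mul_cexp_neg_mul_Ioi {a p : ℂ} (ha : 0 < a.re) (hp : 0 < p.re) :
    ∫ t in Ioi (0 : ℝ), (t : ℂ) ^ (a - 1) * cexp (-(p * t)) = (1 / p) ^ a * Gamma a := by
  refine eqOn_re_pos_of_forall_ofReal_eq (g := fun p => (1 / p) ^ a * Gamma a)
    (differentiableOn_integral_cpow_mul_cexp_neg_mul_Ioi ha) ?_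
    (fun r hr => integral_cpow_mul_exp_neg_mul_Ioi ha hr) hp
  intro z (hz : 0 < z.re)
  have hz0 : z ≠ 0 := fun h => by simp [h] at hz
  have hslit : 1 / z ∈ slitPlane := by
    rw [mem_slitPlane_iff, one_div, inv_re]
    exact Or.inl (div_pos hz (normSq_pos.2 hz0))
  exact ((((differentiableAt_const 1).div differentiableAt_id hz0).cpow
    (differentiableAt_const a) hslit).mul_const _).differentiableWithinAt

lemma continuousOn_Gamma_one_sub : ContinuousOn (fun α : ℝ => Real.Gamma (1 - α)) (Iio 1) :=
  fun α (hα : α < 1) => ((Real.differentiableAt_Gamma fun m h => by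
    linarith [(Nat.cast_nonneg m : (0 : ℝ) ≤ m)]).continuousAt.comp
      (continuous_sub_left 1).continuousAt).continuousWithinAt

lemma Real.rpow_le_max_one {b a : ℝ} (hb : 0 ≤ b) (ha₀ : 0 ≤ a) (ha₁ : a ≤ 1) :
    b ^ a ≤ max 1 b := by
  rcases le_total b 1 with h | h
  · exact (Real.rpow_le_one hb h ha₀).trans (le_max_left _ _)
  · exact (Real.rpow_le_rpow_of_exponent_le h ha₁).trans_eq (Real.rpow_one b) |>.trans
      (le_max_right _ _)

lemma cexp_neg_mul_mul_kernel_eq (c : ℝ) {t : ℝ} (ht : 0 < t) (α : ℝ) (p : ℂ) :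
    cexp (-p * t) * ((c * (t ^ (-α) / Real.Gamma (1 - α)) : ℝ) : ℂ)
      = ((c / Real.Gamma (1 - α) : ℝ) : ℂ) * ((t : ℂ) ^ ((1 - α : ℂ) - 1) * cexp (-(p * t))) := by
  rw [sub_sub_cancel_left, ← ofReal_neg, ← ofReal_cpow ht.le, neg_mul]
  push_cast
  ring

section FractionalKernel

variable (c : ℝ) {α : ℝ} {p : ℂ}

lemma integrableOn_cexp_neg_mul_mul_kernel (hα : α < 1) (hp : 0 < p.re) :
    IntegrableOn (fun t : ℝ => cexp (-p * t) * ((c * (t ^ (-α) / Real.Gamma (1 - α)) : ℝ) : ℂ))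
      (Ioi 0) := by
  refine ((integrableOn_cpow_mul_cexp_neg_mul_Ioi (a := 1 - α) (by simpa) hp).const_mul
    ((c / Real.Gamma (1 - α) : ℝ) : ℂ)).congr ?_
  filter_upwards [ae_restrict_mem measurableSet_Ioi] with t ht
  rw [cexp_neg_mul_mul_kernel_eq c ht]

lemma integral_cexp_neg_mul_mul_kernel (hα : α < 1) (hp : 0 < p.re) :
    ∫ t in Ioi (0 : ℝ), cexp (-p * t) * ((c * (t ^ (-α) / Real.Gamma (1 - α)) : ℝ) : ℂ)
      = c * p ^ ((α : ℂ) - 1) := by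
  have hΓ : (Real.Gamma (1 - α) : ℂ) ≠ 0 :=
    ofReal_ne_zero.2 (Real.Gamma_pos_of_pos (by linarith)).ne'
  have harg : p.arg ≠ Real.pi := slitPlane_arg_ne_pi (Or.inl hp)
  have hΓc : Gamma (1 - α) = Real.Gamma (1 - α) := by rw [← Gamma_ofReal]; push_cast; rfl
  rw [setIntegral_congr_fun measurableSet_Ioi fun t ht => cexp_neg_mul_mul_kernel_eq c ht α p,
    integral_const_mul, integral_cpow_mul_cexp_neg_mul_Ioi (by simpa) hp, hΓc, one_div,
    inv_cpow _ _ harg, ← cpow_neg, neg_sub, ofReal_div]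
  field_simp

lemma integral_norm_cexp_neg_mul_mul_kernel (hα : α < 1) (hp : 0 < p.re) :
    ∫ t in Ioi (0 : ℝ), ‖cexp (-p * t) * ((c * (t ^ (-α) / Real.Gamma (1 - α)) : ℝ) : ℂ)‖
      = |c| * (1 / p.re) ^ (1 - α) := by
  have hΓ : 0 < Real.Gamma (1 - α) := Real.Gamma_pos_of_pos (by linarith)
  have hnorm : ∀ t ∈ Ioi (0 : ℝ),
      ‖cexp (-p * t) * ((c * (t ^ (-α) / Real.Gamma (1 - α)) : ℝ) : ℂ)‖
        = |c| / Real.Gamma (1 - α) * (t ^ ((1 - α) - 1) * Real.exp (-(p.re * t))) :=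
    fun t ht => by
      rw [cexp_neg_mul_mul_kernel_eq c ht α p, norm_mul, norm_real, norm_cpow_mul_cexp_neg_mul ht,
        Real.norm_eq_abs, abs_div, abs_of_pos hΓ]
      simp
  rw [setIntegral_congr_fun measurableSet_Ioi hnorm, integral_const_mul,
    Real.integral_rpow_mul_exp_neg_mul_Ioi (by linarith) hp]
  field_simp

end FractionalKernel

lemma aestronglyMeasurable_cexp_neg_mul_mul_weighted_kernel {μ : ℝ → ℝ}
    (hμ : AEMeasurable μ (volume.restrict (Ioo 0 1))) (p : ℂ) :
    AEStronglyMeasurable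
      (fun q : ℝ × ℝ => cexp (-p * q.1) * ((μ q.2 * (q.1 ^ (-q.2) / Real.Gamma (1 - q.2)) : ℝ) : ℂ))
      ((volume.restrict (Ioi 0)).prod (volume.restrict (Ioo 0 1))) := by
  have hΓ : AEMeasurable (fun α : ℝ => Real.Gamma (1 - α)) (volume.restrict (Ioo 0 1)) :=
    (continuousOn_Gamma_one_sub.mono Ioo_subset_Iio_self).aemeasurable measurableSet_Ioo
  have hsnd := Measure.quasiMeasurePreserving_snd (μ := volume.restrict (Ioi (0 : ℝ)))
    (ν := volume.restrict (Ioo (0 : ℝ) 1))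
  exact (by fun_prop : Continuous fun q : ℝ × ℝ => cexp (-p * q.1)).aestronglyMeasurable.mul
    (measurable_ofReal.comp_aemeasurable ((hμ.comp_quasiMeasurePreserving hsnd).mul
      ((measurable_fst.pow measurable_snd.neg).aemeasurable.div
        (hΓ.comp_quasiMeasurePreserving hsnd)))).aestronglyMeasurable

lemma integrable_cexp_neg_mul_mul_weighted_kernel {μ : ℝ → ℝ} {M : ℝ}
    (hμm : AEMeasurable μ (volume.restrict (Ioo 0 1)))
    (hμ : ∀ᵐ α ∂(volume.restrict (Ioo (0 : ℝ) 1)), |μ α| ≤ M) {p : ℂ} (hp : 0 < p.re) :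
    Integrable
      (fun q : ℝ × ℝ => cexp (-p * q.1) * ((μ q.2 * (q.1 ^ (-q.2) / Real.Gamma (1 - q.2)) : ℝ) : ℂ))
      ((volume.restrict (Ioi 0)).prod (volume.restrict (Ioo 0 1))) := by
  have hF := aestronglyMeasurable_cexp_neg_mul_mul_weighted_kernel hμm p
  refine (integrable_prod_iff' hF).2 ⟨?_, ?_⟩
  · filter_upwards [ae_restrict_mem measurableSet_Ioo] with α hα
    exact integrableOn_cexp_neg_mul_mul_kernel (μ α) hα.2 hp
  · refine Integrable.mono' (integrable_const (M * max 1 (1 / p.re)))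
      hF.norm.prod_swap.integral_prod_right' ?_
    filter_upwards [hμ, ae_restrict_mem measurableSet_Ioo] with α hμα hα
    rw [Real.norm_of_nonneg (integral_nonneg fun _ => norm_nonneg _),
      integral_norm_cexp_neg_mul_mul_kernel (μ α) hα.2 hp]
    exact mul_le_mul hμα (Real.rpow_le_max_one (by positivity) (by linarith [hα.2])
      (by linarith [hα.1])) (by positivity) ((abs_nonneg _).trans hμα)

/-- for a non-negative weight `μ ∈ L^∞(0,1)` (essential bound `M`) and
`Re p > 0`, the function `(t,α) ↦ e^(-pt) μ(α) t^(-α)/Γ(1-α)` is absolutely integrable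
on `(0,∞) × (0,1)`, and the Laplace transform of the distributed-order kernel
`K(t) = ∫₀¹ μ(α) t^(-α)/Γ(1-α) dα` equals `∫₀¹ μ(α) p^(α-1) dα` (principal branch). -/
theorem stmt_4 (μ : ℝ → ℝ) (hmeas : Measurable μ) (M : ℝ)
    (hμ : ∀ᵐ α ∂(volume.restrict (Ioo (0:ℝ) 1)), 0 ≤ μ α ∧ μ α ≤ M)
    (p : ℂ) (hp : 0 < p.re) :
    Integrable
      (fun q : ℝ × ℝ =>
        Complex.exp (-p * q.1) * ((μ q.2 * (q.1 ^ (-q.2) / Real.Gamma (1 - q.2)) : ℝ) : ℂ))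
      ((volume.restrict (Ioi (0:ℝ))).prod (volume.restrict (Ioo (0:ℝ) 1))) ∧
    ∫ t in Ioi (0:ℝ),
        Complex.exp (-p * t) *
          ((∫ α in Ioo (0:ℝ) 1, μ α * (t ^ (-α) / Real.Gamma (1 - α)) : ℝ) : ℂ)
      = ∫ α in Ioo (0:ℝ) 1, (μ α : ℂ) * p ^ ((α : ℂ) - 1) := by
  have hint := integrable_cexp_neg_mul_mul_weighted_kernel hmeas.aemeasurable
    (hμ.mono fun α h => abs_le.2 ⟨by linarith [h.1, h.2], h.2⟩) hp
  refine ⟨hint, ?_⟩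
  calc _ = ∫ t in Ioi (0 : ℝ), ∫ α in Ioo (0 : ℝ) 1,
        cexp (-p * t) * ((μ α * (t ^ (-α) / Real.Gamma (1 - α)) : ℝ) : ℂ) := by
        congr! 2 with t
        rw [integral_const_mul]
        exact congrArg _ integral_ofReal.symm
    _ = ∫ α in Ioo (0 : ℝ) 1, ∫ t in Ioi (0 : ℝ),
        cexp (-p * t) * ((μ α * (t ^ (-α) / Real.Gamma (1 - α)) : ℝ) : ℂ) :=
      integral_integral_swap hint
    _ = _ := setIntegral_congr_fun measurableSet_Ioo fun α hα =>
      integral_cexp_neg_mul_mul_kernel (μ α) hα.2 hp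
end

section
/- Let k : (0,∞) → [0,∞) be measurable with k restricted to (0,1) in L¹ and k restricted to (1,∞) in L^∞. Let m ∈ ℕ, M ≥ 0, and let φ : [0,∞) → [0,∞) be measurable with (1+t)^{m+2} φ(t) ≤ M for all t ≥ 0. Then for every t ≥ 0, (1+t)^m ∫₀^∞ k(s) φ(t+s) ds ≤ (‖k‖_{L¹(0,1)} + ‖k‖_{L^∞(1,∞)}) · M. -/
open MeasureTheory Set

/-!
Since `(1+t)^m (1+s)^2 ≤ (1+t+s)^(m+2)`, the translate `g = φ(t + ·)` satisfies
`(1+s)^2 g(s) ≤ M'` with `M' = M / (1+t)^m`. Split `(0, ∞)` at `1`: on `(0,1)` this gives `g ≤ M'`,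
so that part of the integral is at most `‖k‖_{L¹(0,1)} M'`; on `(1,∞)` it gives `k g ≤ B M' s⁻²`,
and `∫₁^∞ s⁻² ds = 1`.
-/

lemma one_add_pow_mul_one_add_sq_le {t s : ℝ} (ht : 0 ≤ t) (hs : 0 ≤ s) (m : ℕ) :
    (1 + t) ^ m * (1 + s) ^ 2 ≤ (1 + (t + s)) ^ (m + 2) := by
  rw [pow_add]
  gcongr <;> linarith

lemma nonneg_of_ae_restrict_Ioi_le {k : ℝ → ℝ} {a B : ℝ} (hknn : ∀ s ∈ Ioi a, 0 ≤ k s)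
    (hkB : ∀ᵐ s ∂(volume.restrict (Ioi a)), k s ≤ B) : 0 ≤ B := by
  have hne : volume.restrict (Ioi a) ≠ 0 := by simp [Measure.restrict_eq_zero]
  have hB : ∀ᵐ s ∂(volume.restrict (Ioi a)), 0 ≤ B := by
    filter_upwards [hkB, ae_restrict_mem measurableSet_Ioi] with s hs has
    exact (hknn s has).trans hs
  exact (ae_neBot.mpr hne).nonempty_of_mem hB |>.choose_spec

section

variable {α : Type*} [MeasurableSpace α] {μ : Measure α} {S : Set α} {k g : α → ℝ} {M : ℝ}

lemma integrableOn_mul_and_setIntegral_mul_le_of_le_const (hS : MeasurableSet S)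
    (hk : IntegrableOn k S μ) (hknn : ∀ s ∈ S, 0 ≤ k s) (hg : AEStronglyMeasurable g (μ.restrict S))
    (hgnn : ∀ s ∈ S, 0 ≤ g s) (hgM : ∀ s ∈ S, g s ≤ M) :
    IntegrableOn (fun s => k s * g s) S μ ∧ ∫ s in S, k s * g s ∂μ ≤ (∫ s in S, k s ∂μ) * M := by
  have hkg_le : ∀ s ∈ S, k s * g s ≤ k s * M := fun s hs =>
    mul_le_mul_of_nonneg_left (hgM s hs) (hknn s hs)
  have hint : IntegrableOn (fun s => k s * g s) S μ := by
    refine Integrable.mono' (hk.mul_const M) (hk.aestronglyMeasurable.mul hg) ?_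
    filter_upwards [ae_restrict_mem hS] with s hs
    rw [Real.norm_of_nonneg (mul_nonneg (hknn s hs) (hgnn s hs))]
    exact hkg_le s hs
  refine ⟨hint, ?_⟩
  rw [← integral_mul_const]
  exact setIntegral_mono_on hint (hk.mul_const M) hS hkg_le

end

lemma integrableOn_Ioi_one_mul_and_setIntegral_mul_le {k g : ℝ → ℝ} {B M : ℝ}
    (hk : AEStronglyMeasurable k (volume.restrict (Ioi 1))) (hknn : ∀ s ∈ Ioi (1 : ℝ), 0 ≤ k s)
    (hkB : ∀ᵐ s ∂(volume.restrict (Ioi (1 : ℝ))), k s ≤ B)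
    (hg : AEStronglyMeasurable g (volume.restrict (Ioi 1))) (hgnn : ∀ s ∈ Ioi (1 : ℝ), 0 ≤ g s)
    (hgM : ∀ s ∈ Ioi (1 : ℝ), s ^ 2 * g s ≤ M) :
    IntegrableOn (fun s => k s * g s) (Ioi 1) ∧ ∫ s in Ioi (1 : ℝ), k s * g s ≤ B * M := by
  have hB : 0 ≤ B := nonneg_of_ae_restrict_Ioi_le hknn hkB
  have hdom : IntegrableOn (fun s : ℝ => B * M * s ^ (-2 : ℝ)) (Ioi 1) :=
    (integrableOn_Ioi_rpow_of_lt (by norm_num) one_pos).const_mul (B * M)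
  have hkg_le : ∀ᵐ s ∂(volume.restrict (Ioi (1 : ℝ))), k s * g s ≤ B * M * s ^ (-2 : ℝ) := by
    filter_upwards [hkB, ae_restrict_mem measurableSet_Ioi] with s hs hs1
    have hs0 : (0 : ℝ) < s := one_pos.trans hs1
    have hg_le : g s ≤ M * s ^ (-2 : ℝ) := by
      rw [Real.rpow_neg hs0.le, Real.rpow_two, ← div_eq_mul_inv, le_div_iff₀ (by positivity),
        mul_comm]
      exact hgM s hs1
    calc k s * g s ≤ B * (M * s ^ (-2 : ℝ)) := mul_le_mul hs hg_le (hgnn s hs1) hB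
      _ = B * M * s ^ (-2 : ℝ) := by ring
  have hint : IntegrableOn (fun s => k s * g s) (Ioi 1) := by
    refine Integrable.mono' hdom (hk.mul hg) ?_
    filter_upwards [hkg_le, ae_restrict_mem measurableSet_Ioi] with s hs hs1
    rwa [Real.norm_of_nonneg (mul_nonneg (hknn s hs1) (hgnn s hs1))]
  refine ⟨hint, ?_⟩
  calc ∫ s in Ioi (1 : ℝ), k s * g s ≤ ∫ s in Ioi (1 : ℝ), B * M * s ^ (-2 : ℝ) :=
        integral_mono_ae hint hdom hkg_le
    _ = B * M := by
        rw [integral_const_mul, integral_Ioi_rpow_of_lt (by norm_num) one_pos]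
        norm_num

lemma integrableOn_Ioi_zero_mul_and_setIntegral_mul_le {k g : ℝ → ℝ} {B M : ℝ}
    (hkmeas : Measurable k) (hknn : ∀ s : ℝ, 0 < s → 0 ≤ k s) (hk1 : IntegrableOn k (Ioo 0 1))
    (hkB : ∀ᵐ s ∂(volume.restrict (Ioi (1 : ℝ))), k s ≤ B)
    (hgmeas : Measurable g) (hgnn : ∀ s : ℝ, 0 < s → 0 ≤ g s)
    (hgM : ∀ s : ℝ, 0 < s → (1 + s) ^ 2 * g s ≤ M) :
    IntegrableOn (fun s => k s * g s) (Ioi 0) ∧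
      ∫ s in Ioi (0 : ℝ), k s * g s ≤ ((∫ s in Ioo (0 : ℝ) 1, k s) + B) * M := by
  obtain ⟨hint₀, hle₀⟩ := integrableOn_mul_and_setIntegral_mul_le_of_le_const measurableSet_Ioo
    hk1 (fun s hs => hknn s hs.1) hgmeas.aestronglyMeasurable (fun s hs => hgnn s hs.1)
    fun s hs => le_trans (le_mul_of_one_le_left (hgnn s hs.1) (one_le_pow₀ (by linarith [hs.1])))
      (hgM s hs.1)
  have hs_pos : ∀ s ∈ Ioi (1 : ℝ), 0 < s := fun s hs => one_pos.trans hs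
  obtain ⟨hint₁, hle₁⟩ := integrableOn_Ioi_one_mul_and_setIntegral_mul_le
    hkmeas.aestronglyMeasurable (fun s hs => hknn s (hs_pos s hs)) hkB
    hgmeas.aestronglyMeasurable (fun s hs => hgnn s (hs_pos s hs))
    fun s hs => le_trans (mul_le_mul_of_nonneg_right (by nlinarith [hs_pos s hs])
      (hgnn s (hs_pos s hs))) (hgM s (hs_pos s hs))
  have hIoc : IntegrableOn (fun s => k s * g s) (Ioc 0 1) :=
    (integrableOn_Ioc_iff_integrableOn_Ioo enorm_ne_top).mpr hint₀
  rw [← Ioc_union_Ioi_eq_Ioi zero_le_one]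
  refine ⟨hIoc.union hint₁, ?_⟩
  rw [setIntegral_union (Ioc_disjoint_Ioi le_rfl) measurableSet_Ioi hIoc hint₁,
    integral_Ioc_eq_integral_Ioo, add_mul]
  exact add_le_add hle₀ hle₁

theorem stmt_6_general (k : ℝ → ℝ) (hkmeas : Measurable k) (hknn : ∀ s : ℝ, 0 < s → 0 ≤ k s)
    (hk1 : IntegrableOn k (Ioo 0 1)) (B : ℝ)
    (hkB : ∀ᵐ s ∂(volume.restrict (Ioi (1:ℝ))), k s ≤ B)
    (m : ℕ) (M : ℝ)
    (φ : ℝ → ℝ) (hφmeas : Measurable φ) (hφnn : ∀ t : ℝ, 0 ≤ t → 0 ≤ φ t)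
    (hφ : ∀ t : ℝ, 0 ≤ t → (1 + t) ^ (m + 2) * φ t ≤ M) :
    ∀ t : ℝ, 0 ≤ t →
      IntegrableOn (fun s : ℝ => k s * φ (t + s)) (Ioi 0) ∧
      (1 + t) ^ m * ∫ s in Ioi (0:ℝ), k s * φ (t + s)
        ≤ ((∫ s in Ioo (0:ℝ) 1, k s) + B) * M := by
  intro t ht
  have hw : 0 < (1 + t) ^ m := by positivity
  have hgM : ∀ s : ℝ, 0 < s → (1 + s) ^ 2 * φ (t + s) ≤ M / (1 + t) ^ m := by
    intro s hs
    rw [le_div_iff₀ hw]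
    calc (1 + s) ^ 2 * φ (t + s) * (1 + t) ^ m
        = (1 + t) ^ m * (1 + s) ^ 2 * φ (t + s) := by ring
      _ ≤ (1 + (t + s)) ^ (m + 2) * φ (t + s) := mul_le_mul_of_nonneg_right
          (one_add_pow_mul_one_add_sq_le ht hs.le m) (hφnn _ (by linarith))
      _ ≤ M := hφ _ (by linarith)
  obtain ⟨hint, hle⟩ := integrableOn_Ioi_zero_mul_and_setIntegral_mul_le (g := fun s => φ (t + s))
    hkmeas hknn hk1 hkB (hφmeas.comp (measurable_const_add t)) (fun s hs => hφnn _ (by linarith)) hgM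
  refine ⟨hint, ?_⟩
  calc (1 + t) ^ m * ∫ s in Ioi (0:ℝ), k s * φ (t + s)
      ≤ (1 + t) ^ m * (((∫ s in Ioo (0:ℝ) 1, k s) + B) * (M / (1 + t) ^ m)) := by gcongr
    _ = ((∫ s in Ioo (0:ℝ) 1, k s) + B) * M := by field_simp

/-- weighted estimate. If `k ≥ 0` is measurable, integrable on `(0,1)` and
essentially bounded by `B` on `(1,∞)`, and `φ ≥ 0` is measurable with
`(1+t)^(m+2) φ(t) ≤ M` for all `t ≥ 0`, then for every `t ≥ 0` the function
`s ↦ k(s) φ(t+s)` is integrable on `(0,∞)` and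
`(1+t)^m ∫₀^∞ k(s) φ(t+s) ds ≤ (‖k‖_{L¹(0,1)} + B) M`. -/
theorem stmt_6 (k : ℝ → ℝ) (hkmeas : Measurable k) (hknn : ∀ s : ℝ, 0 < s → 0 ≤ k s)
    (hk1 : IntegrableOn k (Ioo 0 1)) (B : ℝ)
    (hkB : ∀ᵐ s ∂(volume.restrict (Ioi (1:ℝ))), k s ≤ B)
    (m : ℕ) (M : ℝ) (hM : 0 ≤ M)
    (φ : ℝ → ℝ) (hφmeas : Measurable φ) (hφnn : ∀ t : ℝ, 0 ≤ t → 0 ≤ φ t)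
    (hφ : ∀ t : ℝ, 0 ≤ t → (1 + t) ^ (m + 2) * φ t ≤ M) :
    ∀ t : ℝ, 0 ≤ t →
      IntegrableOn (fun s : ℝ => k s * φ (t + s)) (Ioi 0) ∧
      (1 + t) ^ m * ∫ s in Ioi (0:ℝ), k s * φ (t + s)
        ≤ ((∫ s in Ioo (0:ℝ) 1, k s) + B) * M :=
  stmt_6_general k hkmeas hknn hk1 B hkB m M φ hφmeas hφnn hφ
end
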